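/- arXiv:1803.06930 — 2 statements merged into one kernel-verified Lean document; each statement's English description precedes it below -/
import Mathlib

section
/- Let V be a finite set, let i0, i1 ∈ V, and let k : V × V → ℕ satisfy k(i,i) = 0 for all i and the divergence condition: for every i ∈ V, Σ_{j∈V} (k(i,j) − k(j,i)) = 1_{i=i0} − 1_{i=i1}. For i ∈ V set k_i = Σ_{j∈V} k(i,j), let S = {i ∈ V : k_i > 0} ∪ {i1}, and assume i0 ∈ S. Let T ⊆ V × V be a set of ordered pairs such that: for every i ∈ S with i ≠ i1 there is exactly one j with (i,j) ∈ T; no pair of the form (i1, j) belongs to T; k(i,j) ≥ 1 for every (i,j) ∈ T; and iterating the map i ↦ (the unique j with (i,j) ∈ T) starting from any i ∈ S ∖ {i1} reaches i1 after finitely many steps (so T is a spanning tree of S oriented toward the root i1). Then the number of finite sequences γ = (γ_0, …, γ_n) with values in V, where n = Σ_{(i,j)} k(i,j), such that γ_0 = i0, γ_n = i1, k(γ) = k, and the last-exit tree of γ equals T, is exactly ∏_{i∈S} [ (k_i − 1_{i≠i1})! / ∏_{j∈V} (k(i,j) − 1_{(i,j)∈T})! ]. -/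
/-- The crossing numbers of a finite path `γ = (γ_0, …, γ_n)`:
`crossings γ (i, j)` is the number of times `t < n` with `γ_t = i` and `γ_{t+1} = j`. -/
def crossings {V : Type*} [DecidableEq V] {n : ℕ} (γ : Fin (n + 1) → V) (p : V × V) : ℕ :=
  (Finset.univ.filter fun t : Fin n => γ t.castSucc = p.1 ∧ γ t.succ = p.2).card

/-- The last-exit tree of a finite path `γ = (γ_0, …, γ_n)`: the set of ordered pairs `(i, j)`
such that for some `t < n` one has `γ_t = i`, `γ_{t+1} = j`, and `γ_s ≠ i` for all
`t < s ≤ n`. -/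
def lastExitTree {V : Type*} {n : ℕ} (γ : Fin (n + 1) → V) : Set (V × V) :=
  {p | ∃ t : Fin n, γ t.castSucc = p.1 ∧ γ t.succ = p.2 ∧
    ∀ s : Fin (n + 1), (t : ℕ) < (s : ℕ) → γ s ≠ p.1}

set_option linter.unusedSectionVars false

section Helpers

variable {V : Type*} [Fintype V] [DecidableEq V]

lemma crossings_eq_sum {n : ℕ} (γ : Fin (n + 1) → V) (p : V × V) :
    crossings γ p = ∑ t : Fin n, if γ t.castSucc = p.1 ∧ γ t.succ = p.2 then 1 else 0 := by
  rw [crossings, Finset.card_filter]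

lemma crossings_cons {m : ℕ} (x : V) (δ : Fin (m + 1) → V) (p : V × V) :
    crossings (Fin.cons x δ : Fin (m + 2) → V) p =
      crossings δ p + if x = p.1 ∧ δ 0 = p.2 then 1 else 0 := by
  rw [crossings_eq_sum, crossings_eq_sum, Fin.sum_univ_succ, add_comm]
  have e1 : ∀ t : Fin m, (Fin.cons x δ : Fin (m+2) → V) t.succ.castSucc = δ t.castSucc :=
    fun t => by rw [← Fin.succ_castSucc]; exact Fin.cons_succ _ _ _
  have e2 : ∀ t : Fin m, (Fin.cons x δ : Fin (m+2) → V) t.succ.succ = δ t.succ :=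
    fun t => rfl
  have e3 : (Fin.cons x δ : Fin (m+2) → V) (Fin.castSucc 0) = x := rfl
  have e4 : (Fin.cons x δ : Fin (m+2) → V) (Fin.succ 0) = δ 0 := rfl
  simp only [e1, e2, e3, e4]

lemma row_crossings {m : ℕ} (δ : Fin (m + 1) → V) (i : V) :
    ∑ j : V, crossings δ (i, j) =
      (Finset.univ.filter fun t : Fin m => δ t.castSucc = i).card := by
  rw [Finset.card_filter]
  simp only [crossings_eq_sum]
  rw [Finset.sum_comm]
  apply Finset.sum_congr rfl
  intro t _
  by_cases h : δ t.castSucc = i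
  · simp [h]
  · simp [h]

lemma appear_of_row_pos {m : ℕ} {δ : Fin (m + 1) → V} {i : V}
    (h : 0 < ∑ j : V, crossings δ (i, j)) : ∃ t : Fin m, δ t.castSucc = i := by
  rw [row_crossings] at h
  obtain ⟨t, ht⟩ := Finset.card_pos.mp h
  exact ⟨t, (Finset.mem_filter.mp ht).2⟩

lemma crossing_pos_of_appear {m : ℕ} {δ : Fin (m + 1) → V} {i : V} (t : Fin m)
    (h : δ t.castSucc = i) : 0 < crossings δ (i, δ t.succ) := by
  rw [crossings]
  exact Finset.card_pos.mpr ⟨t, Finset.mem_filter.mpr ⟨Finset.mem_univ t, h, rfl⟩⟩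

lemma crossings_pos_of_mem_lastExitTree {m : ℕ} {δ : Fin (m + 1) → V} {p : V × V}
    (h : p ∈ lastExitTree δ) : 0 < crossings δ p := by
  obtain ⟨t, h1, h2, -⟩ := h
  rw [crossings]
  exact Finset.card_pos.mpr ⟨t, Finset.mem_filter.mpr ⟨Finset.mem_univ t, h1, h2⟩⟩

lemma lastExitTree_cons {m : ℕ} (x : V) (δ : Fin (m + 1) → V) :
    lastExitTree (Fin.cons x δ : Fin (m + 2) → V) =
      lastExitTree δ ∪ {p : V × V | p.1 = x ∧ p.2 = δ 0 ∧ ∀ s : Fin (m + 1), δ s ≠ x} := by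
  have key : ∀ s : Fin (m+1), (Fin.cons x δ : Fin (m+2) → V) s.succ = δ s := fun s => rfl
  have key0 : (Fin.cons x δ : Fin (m+2) → V) 0 = x := rfl
  have keycs : ∀ t : Fin m, (Fin.cons x δ : Fin (m+2) → V) (t.succ).castSucc = δ t.castSucc :=
    fun t => by rw [← Fin.succ_castSucc]; exact key t.castSucc
  ext p
  simp only [lastExitTree, Set.mem_setOf_eq, Set.mem_union]
  constructor
  · rintro ⟨t, h1, h2, h3⟩
    rcases Fin.eq_zero_or_eq_succ t with rfl | ⟨t', rfl⟩
    · right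
      have hx : p.1 = x := by rw [← h1]; rfl
      have h2' : p.2 = δ 0 := by rw [← h2]; exact key 0
      exact ⟨hx, h2', fun s hc => h3 s.succ (by simp [Fin.val_succ])
        ((key s).trans (hc.trans hx.symm))⟩
    · left
      refine ⟨t', (keycs t').symm.trans h1, (key t'.succ).symm.trans h2, fun s hs hc => ?_⟩
      exact h3 s.succ (by simp only [Fin.val_succ]; omega) ((key s).trans hc)
  · rintro (⟨t, h1, h2, h3⟩ | ⟨h1, h2, h3⟩)
    · refine ⟨t.succ, (keycs t).trans h1, (key t.succ).trans h2, fun s hs => ?_⟩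
      rcases Fin.eq_zero_or_eq_succ s with rfl | ⟨s', rfl⟩
      · exact absurd hs (by simp)
      · rw [key s']
        exact h3 s' (by simp only [Fin.val_succ] at hs ⊢; omega)
    · refine ⟨0, ?_, ?_, fun s hs => ?_⟩
      · rw [show ((0:Fin (m+1)).castSucc) = (0 : Fin (m+2)) from rfl, key0]; exact h1.symm
      · rw [key 0]; exact h2.symm
      · rcases Fin.eq_zero_or_eq_succ s with rfl | ⟨s', rfl⟩
        · exact absurd hs (by simp)
        · rw [key s']
          exact fun hc => h3 s' (hc.trans h1)

open Finset in
lemma prod_factorial_sub (a : V → ℕ) (j : V) (hj : 0 < a j) :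
    ∏ x : V, (a x).factorial =
      a j * ∏ x : V, (a x - if x = j then 1 else 0).factorial := by
  rw [← Finset.mul_prod_erase Finset.univ (fun x => (a x).factorial) (Finset.mem_univ j),
      ← Finset.mul_prod_erase Finset.univ (fun x => (a x - if x = j then 1 else 0).factorial)
        (Finset.mem_univ j)]
  have h1 : ∏ x ∈ Finset.univ.erase j, (a x - if x = j then 1 else 0).factorial =
      ∏ x ∈ Finset.univ.erase j, (a x).factorial := by
    apply Finset.prod_congr rfl
    intro x hx
    rw [if_neg (Finset.mem_erase.mp hx).1, Nat.sub_zero]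
  rw [h1, if_pos rfl]
  obtain ⟨c, hc⟩ : ∃ c, a j = c + 1 := ⟨a j - 1, by omega⟩
  rw [hc]
  simp [Nat.factorial_succ]
  ring

open Finset in
lemma multinomial_pascal (a : V → ℕ) (h : 0 < ∑ j : V, a j) :
    Nat.multinomial Finset.univ a =
      ∑ j ∈ Finset.univ.filter (fun j => 0 < a j),
        Nat.multinomial Finset.univ (fun x => a x - if x = j then 1 else 0) := by
  have hpos : 0 < ∏ x : V, (a x).factorial := Finset.prod_pos fun x _ => Nat.factorial_pos _
  apply Nat.eq_of_mul_eq_mul_left hpos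
  rw [Nat.multinomial_spec]
  rw [Finset.mul_sum]
  have hterm : ∀ j ∈ Finset.univ.filter (fun j => 0 < a j),
      (∏ x : V, (a x).factorial) *
        Nat.multinomial Finset.univ (fun x => a x - if x = j then 1 else 0) =
      a j * ((∑ x : V, a x) - 1).factorial := by
    intro j hj
    have hj' : 0 < a j := (Finset.mem_filter.mp hj).2
    rw [prod_factorial_sub a j hj', mul_assoc, Nat.multinomial_spec]
    congr 2
    rw [Finset.sum_tsub_distrib Finset.univ (g := fun x => if x = j then 1 else 0)
      (fun x _ => by by_cases hx : x = j <;> simp [hx] <;> omega)]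
    congr 1
    simp
  rw [Finset.sum_congr rfl hterm, ← Finset.sum_mul]
  have : ∑ j ∈ Finset.univ.filter (fun j => 0 < a j), a j = ∑ j : V, a j := by
    apply Finset.sum_subset (Finset.filter_subset _ _)
    intro x _ hx
    simp at hx
    omega
  rw [this]
  obtain ⟨c, hc⟩ : ∃ c, ∑ x : V, a x = c + 1 := ⟨(∑ x : V, a x) - 1, by omega⟩
  rw [hc]
  simp [Nat.factorial_succ, mul_comm]

lemma rtg_erase {T : Finset (V × V)} {e : V × V} (hin : ∀ x : V, (x, e.1) ∉ T) :
    ∀ {i j : V}, Relation.ReflTransGen (fun x y : V => (x, y) ∈ T) i j → i ≠ e.1 →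
      Relation.ReflTransGen (fun x y : V => (x, y) ∈ T.erase e) i j := by
  intro i j h
  induction h using Relation.ReflTransGen.head_induction_on with
  | refl => intro _; exact Relation.ReflTransGen.refl
  | @head a b hab hbc ih =>
    intro ha
    refine Relation.ReflTransGen.head ?_ (ih ?_)
    · refine Finset.mem_erase.mpr ⟨?_, hab⟩
      intro hc
      exact ha (by rw [← hc])
    · intro hb
      exact hin a (hb ▸ hab)

lemma cast_sub_ite (k : V × V → ℕ) (e : V × V) (he : 1 ≤ k e) (p : V × V) :
    ((k p - if p = e then 1 else 0 : ℕ) : ℤ) = (k p : ℤ) - (if p = e then 1 else 0) := by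
  by_cases hp : p = e
  · subst hp; simp; omega
  · simp [hp]

lemma hdiv_step (i0 i1 j : V) (k : V × V → ℕ) (hj : 1 ≤ k (i0, j))
    (hdiv : ∀ i : V, ∑ m : V, ((k (i, m) : ℤ) - (k (m, i) : ℤ)) =
      (if i = i0 then 1 else 0) - (if i = i1 then 1 else 0)) :
    ∀ i : V, ∑ m : V, (((k (i, m) - if (i, m) = (i0, j) then 1 else 0 : ℕ) : ℤ) -
        ((k (m, i) - if (m, i) = (i0, j) then 1 else 0 : ℕ) : ℤ)) =
      (if i = j then 1 else 0) - (if i = i1 then 1 else 0) := by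
  intro i
  have hc : ∀ p : V × V, ((k p - if p = (i0, j) then 1 else 0 : ℕ) : ℤ) =
      (k p : ℤ) - (if p = (i0, j) then 1 else 0) := cast_sub_ite k _ hj
  simp only [hc]
  have expand : ∀ m : V,
      ((k (i, m) : ℤ) - (if (i, m) = (i0, j) then 1 else 0)) -
        ((k (m, i) : ℤ) - (if (m, i) = (i0, j) then 1 else 0)) =
      (((k (i, m) : ℤ) - (k (m, i) : ℤ)) - (if (i, m) = (i0, j) then 1 else 0)) +
        (if (m, i) = (i0, j) then 1 else 0) := fun m => by ring
  rw [Finset.sum_congr rfl fun m _ => expand m, Finset.sum_add_distrib,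
    Finset.sum_sub_distrib, hdiv i]
  have e1 : ∑ m : V, (if (i, m) = (i0, j) then (1 : ℤ) else 0) = if i = i0 then 1 else 0 := by
    by_cases hi : i = i0
    · simp [hi, Prod.ext_iff]
    · simp [Prod.ext_iff, hi]
  have e2 : ∑ m : V, (if (m, i) = (i0, j) then (1 : ℤ) else 0) = if i = j then 1 else 0 := by
    by_cases hi : i = j
    · simp [hi, Prod.ext_iff]
    · simp [Prod.ext_iff, hi]
  rw [e1, e2]
  by_cases h1 : i = i0 <;> by_cases h2 : i = i1 <;> by_cases h3 : i = j <;>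
    simp [h1, h2, h3] <;> ring

lemma row_step (i0 j : V) (k : V × V → ℕ) (hj : 1 ≤ k (i0, j)) (i : V) :
    ∑ m : V, (k (i, m) - if (i, m) = (i0, j) then 1 else 0) =
      (∑ m : V, k (i, m)) - if i = i0 then 1 else 0 := by
  rw [Finset.sum_tsub_distrib Finset.univ
    (g := fun m => if (i, m) = (i0, j) then 1 else 0) (fun m _ => by
      by_cases hm : (i, m) = (i0, j)
      · simp only [if_pos hm]; rw [hm]; exact hj
      · simp [hm])]
  congr 1
  by_cases hi : i = i0
  · simp [hi, Prod.ext_iff]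
  · simp [Prod.ext_iff, hi]

lemma total_step (i0 j : V) (k : V × V → ℕ) (hj : 1 ≤ k (i0, j)) :
    ∑ p : V × V, (k p - if p = (i0, j) then 1 else 0) = (∑ p : V × V, k p) - 1 := by
  rw [Finset.sum_tsub_distrib Finset.univ
    (g := fun p => if p = (i0, j) then 1 else 0) (fun p _ => by
      by_cases hp : p = (i0, j)
      · simp only [if_pos hp]; rw [hp]; exact hj
      · simp [hp])]
  congr 1
  simp

lemma target_mem (i0 i1 : V) (k : V × V → ℕ)
    (hdiv : ∀ i : V, ∑ m : V, ((k (i, m) : ℤ) - (k (m, i) : ℤ)) =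
      (if i = i0 then 1 else 0) - (if i = i1 then 1 else 0))
    {x j : V} (hx : 1 ≤ k (x, j)) (hji0 : j ≠ i0) (hji1 : j ≠ i1) :
    0 < ∑ m : V, k (j, m) := by
  by_contra h
  have hrow : ∑ m : V, k (j, m) = 0 := by omega
  have h2 := hdiv j
  rw [Finset.sum_sub_distrib, if_neg hji0, if_neg hji1] at h2
  have hcast : ∑ m : V, (k (j, m) : ℤ) = 0 := by
    rw [← Nat.cast_sum, hrow]; rfl
  have hxle : (k (x, j) : ℤ) ≤ ∑ m : V, (k (m, j) : ℤ) :=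
    Finset.single_le_sum (f := fun m => (k (m, j) : ℤ)) (fun m _ => by positivity)
      (Finset.mem_univ x)
  have : (1 : ℤ) ≤ ∑ m : V, (k (m, j) : ℤ) := le_trans (by exact_mod_cast hx) hxle
  omega

lemma nat_card_sigma' {ι : Type*} [Fintype ι] (A : ι → Type*) [∀ i, Finite (A i)] :
    Nat.card (Sigma A) = ∑ i, Nat.card (A i) := by
  classical
  letI : ∀ i, Fintype (A i) := fun i => Fintype.ofFinite _
  simp [Nat.card_eq_fintype_card]

lemma aux_count (i1 : V) :
    ∀ n : ℕ, ∀ (i0 : V) (k : V × V → ℕ),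
      (∀ i : V, k (i, i) = 0) →
      (∀ i : V, ∑ j : V, ((k (i, j) : ℤ) - (k (j, i) : ℤ)) =
        (if i = i0 then 1 else 0) - (if i = i1 then 1 else 0)) →
      ∀ S : Finset V, S = insert i1 (Finset.univ.filter fun i : V => 0 < ∑ j : V, k (i, j)) →
      i0 ∈ S →
      ∀ T : Finset (V × V),
      (∀ i ∈ S, i ≠ i1 → ∃! j : V, (i, j) ∈ T) →
      (∀ j : V, (i1, j) ∉ T) →
      (∀ p ∈ T, 1 ≤ k p) →
      (∀ i ∈ S, i ≠ i1 → Relation.ReflTransGen (fun x y : V => (x, y) ∈ T) i i1) →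
      (∑ p : V × V, k p) = n →
      Nat.card {γ : Fin (n + 1) → V //
          γ 0 = i0 ∧ γ (Fin.last n) = i1 ∧ (∀ p : V × V, crossings γ p = k p) ∧
          lastExitTree γ = ↑T}
        = ∏ i ∈ S, (Nat.factorial ((∑ j : V, k (i, j)) - if i ≠ i1 then 1 else 0)) /
            (∏ j : V, Nat.factorial (k (i, j) - if (i, j) ∈ T then 1 else 0)) := by
  intro n
  induction n using Nat.strong_induction_on with
  | _ n IH =>
  intro i0 k hdiag hdiv S hS hi0 T hTfun hTroot hTk hTreach hn
  rcases n with _ | m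
  · -- base case
    have hk0 : ∀ p : V × V, k p = 0 := by
      intro p
      have := Finset.sum_eq_zero_iff.mp hn p (Finset.mem_univ p)
      exact this
    have hT0 : T = ∅ := Finset.eq_empty_of_forall_notMem fun p hp => by
      have := hTk p hp; rw [hk0 p] at this; omega
    have hS1 : S = {i1} := by
      rw [hS]
      have : (Finset.univ.filter fun i : V => 0 < ∑ j : V, k (i, j)) = ∅ := by
        apply Finset.eq_empty_of_forall_notMem
        intro i hi
        simp only [Finset.mem_filter] at hi
        have : ∑ j : V, k (i, j) = 0 := Finset.sum_eq_zero fun j _ => hk0 (i, j)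
        omega
      rw [this]; rfl
    have hi01 : i0 = i1 := by rw [hS1] at hi0; simpa using hi0
    have hcard : Nat.card {γ : Fin (0 + 1) → V //
        γ 0 = i0 ∧ γ (Fin.last 0) = i1 ∧ (∀ p : V × V, crossings γ p = k p) ∧
        lastExitTree γ = ↑T} = 1 := by
      rw [Nat.card_eq_one_iff_unique]
      constructor
      · constructor
        intro ⟨γ, hγ⟩ ⟨γ', hγ'⟩
        apply Subtype.ext
        funext t
        have ht : t = 0 := Fin.fin_one_eq_zero t
        rw [ht]
        exact hγ.1.trans hγ'.1.symm
      · refine ⟨⟨fun _ => i1, hi01.symm, rfl, ?_, ?_⟩⟩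
        · intro p
          rw [hk0 p, crossings]
          simp
        · rw [hT0]
          ext p
          simp only [lastExitTree, Set.mem_setOf_eq, Finset.coe_empty, Set.mem_empty_iff_false,
            iff_false]
          rintro ⟨t, -⟩
          exact t.elim0
    rw [hcard, hS1, hT0]
    have : ∑ j : V, k (i1, j) = 0 := Finset.sum_eq_zero fun j _ => hk0 (i1, j)
    simp [this, hk0]
  · -- inductive step: n = m + 1
    have tail_cross : ∀ γ : Fin (m + 1 + 1) → V, γ 0 = i0 → (∀ p, crossings γ p = k p) →
        (∀ p : V × V, crossings (Fin.tail γ) p =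
          k p - if p = (i0, Fin.tail γ 0) then 1 else 0) ∧ 1 ≤ k (i0, Fin.tail γ 0) := by
      intro γ h0 hcr
      have hcons : Fin.cons i0 (Fin.tail γ) = γ := by rw [← h0]; exact Fin.cons_self_tail γ
      have hcc : ∀ p, crossings (Fin.tail γ) p +
          (if i0 = p.1 ∧ Fin.tail γ 0 = p.2 then 1 else 0) = k p := by
        intro p
        exact (crossings_cons i0 (Fin.tail γ) p).symm.trans (by rw [hcons]; exact hcr p)
      have hk1 : 1 ≤ k (i0, Fin.tail γ 0) := by
        have h2 := hcc (i0, Fin.tail γ 0)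
        rw [if_pos ⟨rfl, rfl⟩] at h2
        omega
      refine ⟨fun p => ?_, hk1⟩
      have h1 := hcc p
      by_cases hp : p = (i0, Fin.tail γ 0)
      · rw [if_pos (by rw [hp]; exact ⟨rfl, rfl⟩)] at h1
        rw [if_pos hp]
        omega
      · rw [if_neg (fun hc => hp (Prod.ext_iff.mpr ⟨hc.1.symm, hc.2.symm⟩))] at h1
        rw [if_neg hp]
        omega
    have hrowpos : 0 < ∑ x : V, k (i0, x) := by
      by_cases hi01 : i0 = i1
      · have hex : ∃ p : V × V, 0 < k p := by
          by_contra h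
          push_neg at h
          have : ∑ p : V × V, k p = 0 := Finset.sum_eq_zero fun p _ => by have := h p; omega
          omega
        obtain ⟨⟨x, y⟩, hxy⟩ := hex
        by_cases hxi1 : x = i1
        · rw [hi01, ← hxi1]
          exact lt_of_lt_of_le hxy
            (Finset.single_le_sum (f := fun z => k (x, z)) (fun z _ => Nat.zero_le _)
              (Finset.mem_univ y))
        · have hxS : x ∈ S := by
            rw [hS]
            refine Finset.mem_insert.mpr (Or.inr ?_)
            simp only [Finset.mem_filter, Finset.mem_univ, true_and]
            exact lt_of_lt_of_le hxy
              (Finset.single_le_sum (f := fun z => k (x, z)) (fun z _ => Nat.zero_le _)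
                (Finset.mem_univ y))
          rcases Relation.ReflTransGen.cases_tail (hTreach x hxS hxi1) with heq | ⟨c, -, hc⟩
          · exact absurd heq.symm hxi1
          · have hc1 : (1 : ℤ) ≤ (k (c, i1) : ℤ) := by exact_mod_cast hTk _ hc
            have h2 := hdiv i1
            rw [Finset.sum_sub_distrib, if_pos hi01.symm, if_pos rfl] at h2
            have hcle : (k (c, i1) : ℤ) ≤ ∑ z : V, (k (z, i1) : ℤ) :=
              Finset.single_le_sum (f := fun z => (k (z, i1) : ℤ)) (fun z _ => by positivity)
                (Finset.mem_univ c)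
            rw [hi01]
            have hnn : ((∑ z : V, k (i1, z) : ℕ) : ℤ) = ∑ z : V, (k (i1, z) : ℤ) := by
              push_cast
              rfl
            omega
      · rw [hS] at hi0
        rcases Finset.mem_insert.mp hi0 with h | h
        · exact absurd h hi01
        · simpa using (Finset.mem_filter.mp h).2
    by_cases hcaseB : i0 ≠ i1 ∧ ∑ x : V, k (i0, x) = 1
    · -- Case B
      obtain ⟨hi01, hrow1⟩ := hcaseB
      obtain ⟨j0, hj0T, hj0u⟩ := hTfun i0 hi0 hi01
      have hkj0 : k (i0, j0) = 1 := by
        have h1 : 1 ≤ k (i0, j0) := hTk _ hj0T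
        have h2 : k (i0, j0) ≤ ∑ x : V, k (i0, x) :=
          Finset.single_le_sum (f := fun x => k (i0, x)) (fun _ _ => Nat.zero_le _)
            (Finset.mem_univ j0)
        omega
      have hother : ∀ x : V, x ≠ j0 → k (i0, x) = 0 := by
        intro x hx
        have hadd : k (i0, j0) + ∑ y ∈ Finset.univ.erase j0, k (i0, y) = ∑ y : V, k (i0, y) :=
          Finset.add_sum_erase Finset.univ (fun x => k (i0, x)) (Finset.mem_univ j0)
        have hz : ∑ y ∈ Finset.univ.erase j0, k (i0, y) = 0 := by
          rw [hrow1] at hadd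
          omega
        exact Finset.sum_eq_zero_iff.mp hz x (Finset.mem_erase.mpr ⟨hx, Finset.mem_univ x⟩)
      have hj0ne : j0 ≠ i0 := by
        intro h
        rw [h, hdiag i0] at hkj0
        omega
      have hindeg : ∀ x : V, k (x, i0) = 0 := by
        intro x
        have h2 := hdiv i0
        rw [Finset.sum_sub_distrib, if_pos rfl, if_neg hi01] at h2
        have hrz : ∑ z : V, (k (i0, z) : ℤ) = 1 := by
          rw [← Nat.cast_sum, hrow1]
          rfl
        rw [hrz] at h2
        have hcz : ∑ z : V, (k (z, i0) : ℤ) = 0 := by omega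
        have := (Finset.sum_eq_zero_iff_of_nonneg (fun z _ => by positivity)).mp hcz x
          (Finset.mem_univ x)
        exact_mod_cast this
      have hT_no_into_i0 : ∀ x : V, (x, i0) ∉ T := fun x hx => by
        have h1 := hTk _ hx
        rw [hindeg x] at h1
        omega
      have hcrall : ∀ x : V, k (i0, x) - (if (i0, x) = (i0, j0) then 1 else 0) = 0 := by
        intro x
        by_cases hx : x = j0
        · rw [hx, if_pos rfl, hkj0]
        · rw [if_neg (fun hc => hx (congrArg Prod.snd hc)), hother x hx, Nat.zero_sub]
      have fwd : ∀ γ : Fin (m + 1 + 1) → V,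
          γ 0 = i0 → γ (Fin.last (m + 1)) = i1 → (∀ p, crossings γ p = k p) →
          lastExitTree γ = ↑T →
          Fin.tail γ 0 = j0 ∧ Fin.tail γ (Fin.last m) = i1 ∧
          (∀ p : V × V, crossings (Fin.tail γ) p = k p - if p = (i0, j0) then 1 else 0) ∧
          lastExitTree (Fin.tail γ) = ↑(T.erase (i0, j0)) := by
        intro γ h0 hlast hcr hlet
        obtain ⟨hδcr, hk1⟩ := tail_cross γ h0 hcr
        have hj : Fin.tail γ 0 = j0 := by
          by_contra hne
          rw [hother _ hne] at hk1
          omega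
        rw [hj] at hδcr
        have hδlast : Fin.tail γ (Fin.last m) = i1 := hlast
        have hno : ∀ s : Fin (m + 1), Fin.tail γ s ≠ i0 := by
          intro s
          refine Fin.lastCases ?_ ?_ s
          · rw [hδlast]
            exact fun h => hi01 h.symm
          · intro t ht
            have hpos := crossing_pos_of_appear t ht
            rw [hδcr, hcrall] at hpos
            omega
        have hcons : Fin.cons i0 (Fin.tail γ) = γ := by rw [← h0]; exact Fin.cons_self_tail γ
        have hsp : {p : V × V | p.1 = i0 ∧ p.2 = Fin.tail γ 0 ∧
            ∀ s : Fin (m + 1), Fin.tail γ s ≠ i0} = {((i0 : V), j0)} := by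
          ext q
          simp only [Set.mem_setOf_eq, Set.mem_singleton_iff]
          constructor
          · rintro ⟨h1, h2, -⟩
            exact Prod.ext_iff.mpr ⟨h1, h2.trans hj⟩
          · rintro rfl
            exact ⟨rfl, hj.symm, hno⟩
        have hLET : (↑T : Set (V × V)) = lastExitTree (Fin.tail γ) ∪ {((i0 : V), j0)} := by
          rw [← hlet]
          conv_lhs => rw [← hcons]
          rw [lastExitTree_cons, hsp]
        refine ⟨hj, hδlast, hδcr, ?_⟩
        ext q
        simp only [Finset.coe_erase, Set.mem_diff, Finset.mem_coe, Set.mem_singleton_iff]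
        constructor
        · intro hq
          refine ⟨?_, ?_⟩
          · have hq2 : q ∈ (↑T : Set (V × V)) := by
              rw [hLET]
              exact Or.inl hq
            exact hq2
          · intro hqe
            have hpos := crossings_pos_of_mem_lastExitTree hq
            rw [hqe, hδcr, hcrall] at hpos
            omega
        · rintro ⟨hqT, hqe⟩
          have hq2 : q ∈ lastExitTree (Fin.tail γ) ∪ {((i0 : V), j0)} := by
            rw [← hLET]
            exact hqT
          rcases hq2 with h | h
          · exact h
          · exact absurd h hqe
      have bwd : ∀ δ : Fin (m + 1) → V, δ 0 = j0 → δ (Fin.last m) = i1 →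
          (∀ p : V × V, crossings δ p = k p - if p = (i0, j0) then 1 else 0) →
          lastExitTree δ = ↑(T.erase (i0, j0)) →
          (Fin.cons i0 δ : Fin (m + 1 + 1) → V) 0 = i0 ∧
          (Fin.cons i0 δ : Fin (m + 1 + 1) → V) (Fin.last (m + 1)) = i1 ∧
          (∀ p : V × V, crossings (Fin.cons i0 δ : Fin (m + 1 + 1) → V) p = k p) ∧
          lastExitTree (Fin.cons i0 δ : Fin (m + 1 + 1) → V) = ↑T := by
        intro δ hδ0 hδlast hδcr hδlet
        refine ⟨Fin.cons_zero _ _, hδlast, ?_, ?_⟩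
        · intro p
          rw [crossings_cons]
          have h1 := hδcr p
          by_cases hp : p = (i0, j0)
          · rw [if_pos (by rw [hp]; exact ⟨rfl, hδ0⟩), h1, if_pos hp, hp, hkj0]
          · rw [if_neg (fun hc => hp (Prod.ext_iff.mpr ⟨hc.1.symm, hc.2.symm.trans hδ0⟩)),
              h1, if_neg hp]
            omega
        · have hno : ∀ s : Fin (m + 1), δ s ≠ i0 := by
            intro s
            refine Fin.lastCases ?_ ?_ s
            · rw [hδlast]
              exact fun h => hi01 h.symm
            · intro t ht
              have hpos := crossing_pos_of_appear t ht
              rw [hδcr, hcrall] at hpos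
              omega
          rw [lastExitTree_cons, hδlet]
          have hsp : {p : V × V | p.1 = i0 ∧ p.2 = δ 0 ∧ ∀ s : Fin (m + 1), δ s ≠ i0} =
              {((i0 : V), j0)} := by
            ext q
            simp only [Set.mem_setOf_eq, Set.mem_singleton_iff]
            constructor
            · rintro ⟨h1, h2, -⟩
              exact Prod.ext_iff.mpr ⟨h1, h2.trans hδ0⟩
            · rintro rfl
              exact ⟨rfl, hδ0.symm, hno⟩
          rw [hsp]
          ext q
          simp only [Set.mem_union, Finset.coe_erase, Set.mem_diff, Finset.mem_coe,
            Set.mem_singleton_iff]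
          constructor
          · rintro (⟨h1, -⟩ | rfl)
            · exact h1
            · exact hj0T
          · intro hq
            by_cases hqe : q = ((i0 : V), j0)
            · exact Or.inr hqe
            · exact Or.inl ⟨hq, hqe⟩
      have e : {γ : Fin (m + 1 + 1) → V // γ 0 = i0 ∧ γ (Fin.last (m + 1)) = i1 ∧
            (∀ p : V × V, crossings γ p = k p) ∧ lastExitTree γ = ↑T} ≃
          {δ : Fin (m + 1) → V // δ 0 = j0 ∧ δ (Fin.last m) = i1 ∧
            (∀ p : V × V, crossings δ p = k p - if p = (i0, j0) then 1 else 0) ∧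
            lastExitTree δ = ↑(T.erase (i0, j0))} := by
        refine ⟨fun g => ⟨Fin.tail g.1, fwd g.1 g.2.1 g.2.2.1 g.2.2.2.1 g.2.2.2.2⟩,
                fun d => ⟨Fin.cons i0 d.1, bwd d.1 d.2.1 d.2.2.1 d.2.2.2.1 d.2.2.2.2⟩, ?_, ?_⟩
        · intro g
          apply Subtype.ext
          show Fin.cons i0 (Fin.tail g.1) = g.1
          funext t
          rcases Fin.eq_zero_or_eq_succ t with rfl | ⟨t', rfl⟩
          · exact g.2.1.symm
          · rfl
        · intro d
          apply Subtype.ext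
          rfl
      rw [Nat.card_congr e]
      clear e fwd bwd
      have hkj0' : 1 ≤ k (i0, j0) := by omega
      have hj0S : j0 ∈ S.erase i0 := by
        refine Finset.mem_erase.mpr ⟨hj0ne, ?_⟩
        by_cases hji1 : j0 = i1
        · rw [hS, hji1]
          exact Finset.mem_insert_self _ _
        · rw [hS]
          refine Finset.mem_insert.mpr (Or.inr ?_)
          simp only [Finset.mem_filter, Finset.mem_univ, true_and]
          exact target_mem i0 i1 k hdiv hkj0' hj0ne hji1
      have hSB : S.erase i0 = insert i1 (Finset.univ.filter fun i : V =>
          0 < ∑ x : V, (k (i, x) - if (i, x) = (i0, j0) then 1 else 0)) := by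
        ext i
        rw [Finset.mem_erase, hS]
        simp only [Finset.mem_insert, Finset.mem_filter, Finset.mem_univ, true_and]
        rw [row_step i0 j0 k hkj0' i]
        by_cases hii0 : i = i0
        · subst hii0
          rw [if_pos rfl, hrow1]
          constructor
          · rintro ⟨hc, -⟩
            exact absurd rfl hc
          · rintro (hc | hc)
            · exact absurd hc hi01
            · omega
        · rw [if_neg hii0, Nat.sub_zero]
          constructor
          · rintro ⟨-, h⟩
            exact h
          · intro h
            exact ⟨hii0, h⟩
      have hTfunB : ∀ i ∈ S.erase i0, i ≠ i1 → ∃! x : V, (i, x) ∈ T.erase (i0, j0) := by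
        intro i hi hne
        obtain ⟨x0, hx0, hxu⟩ := hTfun i (Finset.mem_of_mem_erase hi) hne
        have hii0 : i ≠ i0 := (Finset.mem_erase.mp hi).1
        exact ⟨x0, Finset.mem_erase.mpr ⟨fun hc => hii0 (congrArg Prod.fst hc), hx0⟩,
          fun y hy => hxu y (Finset.mem_of_mem_erase hy)⟩
      have hTrootB : ∀ x : V, ((i1, x) : V × V) ∉ T.erase (i0, j0) :=
        fun x hx => hTroot x (Finset.mem_of_mem_erase hx)
      have hTkB : ∀ p ∈ T.erase (i0, j0), 1 ≤ k p - if p = (i0, j0) then 1 else 0 := by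
        intro p hp
        rw [if_neg (Finset.mem_erase.mp hp).1, Nat.sub_zero]
        exact hTk p (Finset.mem_of_mem_erase hp)
      have hTreachB : ∀ i ∈ S.erase i0, i ≠ i1 →
          Relation.ReflTransGen (fun x y : V => (x, y) ∈ T.erase (i0, j0)) i i1 := by
        intro i hi hne
        exact rtg_erase (T := T) (e := ((i0 : V), j0)) (fun x => hT_no_into_i0 x)
          (hTreach i (Finset.mem_of_mem_erase hi) hne) (Finset.mem_erase.mp hi).1
      have hdiagB : ∀ i : V, k (i, i) - (if (i, i) = (i0, j0) then 1 else 0) = 0 := by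
        intro i
        rw [hdiag i]
        exact Nat.zero_sub _
      have hnB : ∑ p : V × V, (k p - if p = (i0, j0) then 1 else 0) = m := by
        rw [total_step i0 j0 k hkj0', hn]
        omega
      rw [IH m (Nat.lt_succ_self m) j0
        (fun p => k p - if p = (i0, j0) then 1 else 0) hdiagB
        (hdiv_step i0 i1 j0 k hkj0' hdiv) (S.erase i0) hSB hj0S (T.erase (i0, j0))
        hTfunB hTrootB hTkB hTreachB hnB]
      rw [← Finset.mul_prod_erase S _ hi0]
      have hFi0one : (Nat.factorial ((∑ x : V, k (i0, x)) - if i0 ≠ i1 then 1 else 0)) /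
          (∏ x : V, Nat.factorial (k (i0, x) - if (i0, x) ∈ T then 1 else 0)) = 1 := by
        rw [hrow1, if_pos hi01]
        have hden : ∏ x : V, Nat.factorial (k (i0, x) - if (i0, x) ∈ T then 1 else 0) = 1 := by
          apply Finset.prod_eq_one
          intro x _
          by_cases hx : x = j0
          · rw [hx, hkj0, if_pos hj0T]
            rfl
          · rw [hother x hx, Nat.zero_sub]
            rfl
        rw [hden]
        rfl
      rw [hFi0one, one_mul]
      apply Finset.prod_congr rfl
      intro i hi
      have hii0 : i ≠ i0 := (Finset.mem_erase.mp hi).1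
      have hrow : ∀ x : V, k (i, x) - (if (i, x) = (i0, j0) then 1 else 0) = k (i, x) :=
        fun x => by rw [if_neg (fun hc => hii0 (congrArg Prod.fst hc)), Nat.sub_zero]
      have hmemiff : ∀ x : V, (((i, x) : V × V) ∈ T.erase (i0, j0)) = (((i, x) : V × V) ∈ T) :=
        fun x => propext (by
          rw [Finset.mem_erase]
          exact and_iff_right (fun hc => hii0 (congrArg Prod.fst hc)))
      simp only [hrow, hmemiff]
    · -- Case A/C
      have hcase : i0 = i1 ∨ 2 ≤ ∑ x : V, k (i0, x) := by
        by_cases hi01 : i0 = i1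
        · exact Or.inl hi01
        · right
          rcases Nat.lt_or_ge (∑ x : V, k (i0, x)) 2 with h | h
          · exact absurd ⟨hi01, by omega⟩ hcaseB
          · exact h
      have hT_i0_sum : (∑ x : V, if (i0, x) ∈ T then 1 else 0) =
          (if i0 ≠ i1 then 1 else 0) := by
        by_cases hi01 : i0 = i1
        · simp [hi01, hTroot]
        · obtain ⟨j0, hj0, hju⟩ := hTfun i0 hi0 hi01
          rw [if_pos hi01]
          have hfil : (Finset.univ.filter fun x => (i0, x) ∈ T) = {j0} := by
            ext x
            simp only [Finset.mem_filter, Finset.mem_univ, true_and, Finset.mem_singleton]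
            exact ⟨fun h => hju x h, fun h => h ▸ hj0⟩
          rw [← Finset.card_filter, hfil, Finset.card_singleton]
      have fact1 : ∑ x : V, (k (i0, x) - if (i0, x) ∈ T then 1 else 0) =
          (∑ x : V, k (i0, x)) - if i0 ≠ i1 then 1 else 0 := by
        rw [Finset.sum_tsub_distrib Finset.univ
          (g := fun x => if (i0, x) ∈ T then 1 else 0) (fun x _ => by
            by_cases hx : (i0, x) ∈ T
            · simp only [if_pos hx]; exact hTk _ hx
            · simp [hx]), hT_i0_sum]
      have hapos : 0 < ∑ x : V, (k (i0, x) - if (i0, x) ∈ T then 1 else 0) := by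
        rw [fact1]
        by_cases hi01 : i0 = i1
        · rw [if_neg (not_not_intro hi01)]
          omega
        · rw [if_pos hi01]
          rcases hcase with h | h
          · exact absurd h hi01
          · omega
      have hkge : ∀ j : V, 0 < k (i0, j) - (if (i0, j) ∈ T then 1 else 0) → 1 ≤ k (i0, j) := by
        intro j hj
        by_cases h : (i0, j) ∈ T <;> simp [h] at hj <;> omega
      have hexist_ret : ∀ (j : V) (δ : Fin (m + 1) → V), 1 ≤ k (i0, j) →
          (∀ p, crossings δ p = k p - if p = (i0, j) then 1 else 0) →
          δ (Fin.last m) = i1 → ∃ s : Fin (m + 1), δ s = i0 := by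
        intro j δ hk1 hδcr hδlast
        rcases hcase with hi01 | hge2
        · exact ⟨Fin.last m, hδlast.trans hi01.symm⟩
        · have hrow : 0 < ∑ x : V, crossings δ (i0, x) := by
            rw [Finset.sum_congr rfl fun x _ => hδcr (i0, x), row_step i0 j k hk1 i0,
              if_pos rfl]
            omega
          obtain ⟨t, ht⟩ := appear_of_row_pos hrow
          exact ⟨t.castSucc, ht⟩
      have fwd : ∀ γ : Fin (m + 1 + 1) → V,
          γ 0 = i0 → γ (Fin.last (m + 1)) = i1 → (∀ p, crossings γ p = k p) →
          lastExitTree γ = ↑T →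
          0 < k (i0, Fin.tail γ 0) - (if (i0, Fin.tail γ 0) ∈ T then 1 else 0) ∧
          (Fin.tail γ 0 = Fin.tail γ 0 ∧ Fin.tail γ (Fin.last m) = i1 ∧
            (∀ p, crossings (Fin.tail γ) p = k p - if p = (i0, Fin.tail γ 0) then 1 else 0) ∧
            lastExitTree (Fin.tail γ) = ↑T) := by
        intro γ h0 hlast hcr hlet
        obtain ⟨hδcr, hk1⟩ := tail_cross γ h0 hcr
        have hδlast : Fin.tail γ (Fin.last m) = i1 := hlast
        have hex : ∃ s, Fin.tail γ s = i0 := hexist_ret _ _ hk1 hδcr hδlast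
        have hcons : Fin.cons i0 (Fin.tail γ) = γ := by rw [← h0]; exact Fin.cons_self_tail γ
        have hsp : {p : V × V | p.1 = i0 ∧ p.2 = Fin.tail γ 0 ∧
            ∀ s : Fin (m + 1), Fin.tail γ s ≠ i0} = ∅ := by
          obtain ⟨s0, hs0⟩ := hex
          exact Set.eq_empty_iff_forall_notMem.mpr fun q hq => hq.2.2 s0 hs0
        have hletT : lastExitTree (Fin.tail γ) = ↑T := by
          have h2 : lastExitTree (Fin.cons i0 (Fin.tail γ) : Fin (m + 2) → V) = ↑T := by
            rw [hcons]; exact hlet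
          rw [lastExitTree_cons, hsp, Set.union_empty] at h2
          exact h2
        refine ⟨?_, rfl, hδlast, hδcr, hletT⟩
        by_cases hmem : (i0, Fin.tail γ 0) ∈ T
        · have hmem' : ((i0, Fin.tail γ 0) : V × V) ∈ lastExitTree (Fin.tail γ) := by
            rw [hletT]; exact hmem
          have hpos := crossings_pos_of_mem_lastExitTree hmem'
          have h3 := hδcr (i0, Fin.tail γ 0)
          rw [if_pos rfl] at h3
          rw [if_pos hmem]
          omega
        · rw [if_neg hmem]
          omega
      have bwd : ∀ (j : V) (δ : Fin (m + 1) → V),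
          0 < k (i0, j) - (if (i0, j) ∈ T then 1 else 0) → δ 0 = j →
          δ (Fin.last m) = i1 → (∀ p, crossings δ p = k p - if p = (i0, j) then 1 else 0) →
          lastExitTree δ = ↑T →
          (Fin.cons i0 δ : Fin (m + 1 + 1) → V) 0 = i0 ∧
          (Fin.cons i0 δ : Fin (m + 1 + 1) → V) (Fin.last (m + 1)) = i1 ∧
          (∀ p, crossings (Fin.cons i0 δ : Fin (m + 1 + 1) → V) p = k p) ∧
          lastExitTree (Fin.cons i0 δ : Fin (m + 1 + 1) → V) = ↑T := by
        intro j δ haj hδ0 hδlast hδcr hδlet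
        have hk1 : 1 ≤ k (i0, j) := hkge j haj
        refine ⟨Fin.cons_zero _ _, ?_, ?_, ?_⟩
        · exact hδlast
        · intro p
          rw [crossings_cons]
          have h1 := hδcr p
          by_cases hp : p = (i0, j)
          · rw [if_pos (by rw [hp]; exact ⟨rfl, hδ0⟩), h1, if_pos hp, hp]
            omega
          · rw [if_neg (fun hc => hp (Prod.ext_iff.mpr ⟨hc.1.symm, hc.2.symm.trans hδ0⟩)),
              h1, if_neg hp]
            omega
        · rw [lastExitTree_cons, hδlet]
          obtain ⟨s0, hs0⟩ := hexist_ret j δ hk1 hδcr hδlast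
          have hsp : {p : V × V | p.1 = i0 ∧ p.2 = δ 0 ∧ ∀ s : Fin (m + 1), δ s ≠ i0} = ∅ :=
            Set.eq_empty_iff_forall_notMem.mpr fun q hq => hq.2.2 s0 hs0
          rw [hsp, Set.union_empty]
      have e : {γ : Fin (m + 1 + 1) → V // γ 0 = i0 ∧ γ (Fin.last (m + 1)) = i1 ∧
            (∀ p : V × V, crossings γ p = k p) ∧ lastExitTree γ = ↑T} ≃
          {x : V × (Fin (m + 1) → V) //
            (fun (j : V) (δ : Fin (m + 1) → V) =>
              0 < k (i0, j) - (if (i0, j) ∈ T then 1 else 0) ∧ (δ 0 = j ∧ δ (Fin.last m) = i1 ∧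
              (∀ p : V × V, crossings δ p = k p - if p = (i0, j) then 1 else 0) ∧
              lastExitTree δ = ↑T)) x.1 x.2} := by
        refine ⟨fun g => ⟨(Fin.tail g.1 0, Fin.tail g.1),
            fwd g.1 g.2.1 g.2.2.1 g.2.2.2.1 g.2.2.2.2⟩,
          fun x => ⟨Fin.cons i0 x.1.2,
            bwd x.1.1 x.1.2 x.2.1 x.2.2.1 x.2.2.2.1 x.2.2.2.2.1 x.2.2.2.2.2⟩, ?_, ?_⟩
        · intro g
          apply Subtype.ext
          show Fin.cons i0 (Fin.tail g.1) = g.1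
          funext t
          rcases Fin.eq_zero_or_eq_succ t with rfl | ⟨t', rfl⟩
          · exact g.2.1.symm
          · rfl
        · intro x
          apply Subtype.ext
          show ((x.1.2 0 : V), x.1.2) = x.1
          exact Prod.ext_iff.mpr ⟨x.2.2.1, rfl⟩
      rw [Nat.card_congr e,
        Nat.card_congr (Equiv.subtypeProdEquivSigmaSubtype
          (fun (j : V) (δ : Fin (m + 1) → V) =>
            0 < k (i0, j) - (if (i0, j) ∈ T then 1 else 0) ∧ (δ 0 = j ∧ δ (Fin.last m) = i1 ∧
            (∀ p : V × V, crossings δ p = k p - if p = (i0, j) then 1 else 0) ∧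
            lastExitTree δ = ↑T))),
        nat_card_sigma']
      clear e fwd bwd
      have step2 : ∑ j : V, Nat.card {δ : Fin (m + 1) → V //
            0 < k (i0, j) - (if (i0, j) ∈ T then 1 else 0) ∧ (δ 0 = j ∧ δ (Fin.last m) = i1 ∧
            (∀ p : V × V, crossings δ p = k p - if p = (i0, j) then 1 else 0) ∧
            lastExitTree δ = ↑T)} =
          ∑ j ∈ Finset.univ.filter
              (fun j : V => 0 < k (i0, j) - (if (i0, j) ∈ T then 1 else 0)),
            Nat.card {δ : Fin (m + 1) → V // δ 0 = j ∧ δ (Fin.last m) = i1 ∧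
            (∀ p : V × V, crossings δ p = k p - if p = (i0, j) then 1 else 0) ∧
            lastExitTree δ = ↑T} := by
        rw [← Finset.sum_filter_add_sum_filter_not Finset.univ
          (fun j : V => 0 < k (i0, j) - (if (i0, j) ∈ T then 1 else 0))]
        have hz : ∑ j ∈ Finset.univ.filter
            (fun j : V => ¬ 0 < k (i0, j) - (if (i0, j) ∈ T then 1 else 0)),
            Nat.card {δ : Fin (m + 1) → V //
            0 < k (i0, j) - (if (i0, j) ∈ T then 1 else 0) ∧ (δ 0 = j ∧ δ (Fin.last m) = i1 ∧
            (∀ p : V × V, crossings δ p = k p - if p = (i0, j) then 1 else 0) ∧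
            lastExitTree δ = ↑T)} = 0 := by
          apply Finset.sum_eq_zero
          intro j hj
          simp only [Finset.mem_filter, Finset.mem_univ, true_and] at hj
          have : IsEmpty {δ : Fin (m + 1) → V //
              0 < k (i0, j) - (if (i0, j) ∈ T then 1 else 0) ∧ (δ 0 = j ∧ δ (Fin.last m) = i1 ∧
              (∀ p : V × V, crossings δ p = k p - if p = (i0, j) then 1 else 0) ∧
              lastExitTree δ = ↑T)} := ⟨fun d => hj d.2.1⟩
          exact Nat.card_of_isEmpty
        rw [hz, add_zero]
        apply Finset.sum_congr rfl
        intro j hj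
        simp only [Finset.mem_filter, Finset.mem_univ, true_and] at hj
        exact Nat.card_congr (Equiv.subtypeEquivRight fun δ =>
          ⟨fun h => h.2, fun h => ⟨hj, h⟩⟩)
      rw [step2]
      clear step2
      have step3 : ∀ j ∈ Finset.univ.filter
            (fun j : V => 0 < k (i0, j) - (if (i0, j) ∈ T then 1 else 0)),
          Nat.card {δ : Fin (m + 1) → V // δ 0 = j ∧ δ (Fin.last m) = i1 ∧
            (∀ p : V × V, crossings δ p = k p - if p = (i0, j) then 1 else 0) ∧
            lastExitTree δ = ↑T} =
          ∏ i ∈ S, (Nat.factorial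
              ((∑ x : V, (k (i, x) - if (i, x) = (i0, j) then 1 else 0)) -
                if i ≠ i1 then 1 else 0)) /
            (∏ x : V, Nat.factorial
              ((k (i, x) - if (i, x) = (i0, j) then 1 else 0) -
                if (i, x) ∈ T then 1 else 0)) := by
        intro j hj
        simp only [Finset.mem_filter, Finset.mem_univ, true_and] at hj
        have hk1 : 1 ≤ k (i0, j) := hkge j hj
        have hji0 : j ≠ i0 := by
          intro h
          rw [h, hdiag i0] at hk1
          exact Nat.not_succ_le_zero 0 hk1
        have hjS : j ∈ S := by
          by_cases hji1 : j = i1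
          · rw [hS, hji1]; exact Finset.mem_insert_self _ _
          · rw [hS]
            refine Finset.mem_insert.mpr (Or.inr ?_)
            simp only [Finset.mem_filter, Finset.mem_univ, true_and]
            exact target_mem i0 i1 k hdiv hk1 hji0 hji1
        have hS' : S = insert i1 (Finset.univ.filter fun i : V =>
            0 < ∑ x : V, (k (i, x) - if (i, x) = (i0, j) then 1 else 0)) := by
          rw [hS]
          ext i
          simp only [Finset.mem_insert, Finset.mem_filter, Finset.mem_univ, true_and]
          rw [row_step i0 j k hk1 i]
          by_cases hii1 : i = i1
          · simp [hii1]
          · simp only [hii1, false_or]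
            by_cases hii0 : i = i0
            · subst hii0
              rw [if_pos rfl]
              rcases hcase with h | h
              · exact absurd h hii1
              · constructor <;> intro <;> omega
            · rw [if_neg hii0, Nat.sub_zero]
        have hTk' : ∀ p ∈ T, 1 ≤ k p - if p = (i0, j) then 1 else 0 := by
          intro p hp
          by_cases hpe : p = (i0, j)
          · rw [if_pos hpe, hpe]
            have h2 : (i0, j) ∈ T := hpe ▸ hp
            rw [if_pos h2] at hj
            omega
          · rw [if_neg hpe, Nat.sub_zero]
            exact hTk p hp
        have hdiag' : ∀ i : V, k (i, i) - (if (i, i) = (i0, j) then 1 else 0) = 0 := by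
          intro i
          rw [hdiag i]
          exact Nat.zero_sub _
        have hn' : ∑ p : V × V, (k p - if p = (i0, j) then 1 else 0) = m := by
          rw [total_step i0 j k hk1, hn]
          omega
        exact IH m (Nat.lt_succ_self m) j
          (fun p => k p - if p = (i0, j) then 1 else 0) hdiag'
          (hdiv_step i0 i1 j k hk1 hdiv) S hS' hjS T hTfun hTroot hTk' hTreach hn'
      rw [Finset.sum_congr rfl step3]
      -- final arithmetic
      have hFi0 : (Nat.factorial ((∑ x : V, k (i0, x)) - if i0 ≠ i1 then 1 else 0)) /
          (∏ x : V, Nat.factorial (k (i0, x) - if (i0, x) ∈ T then 1 else 0)) =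
          Nat.multinomial Finset.univ
            (fun x : V => k (i0, x) - if (i0, x) ∈ T then 1 else 0) := by
        rw [Nat.multinomial, fact1]
      have hpascal := multinomial_pascal
        (fun x : V => k (i0, x) - if (i0, x) ∈ T then 1 else 0) hapos
      rw [← Finset.mul_prod_erase S _ hi0, hFi0, hpascal, Finset.sum_mul]
      apply Finset.sum_congr rfl
      intro j hj
      simp only [Finset.mem_filter, Finset.mem_univ, true_and] at hj
      have hk1 : 1 ≤ k (i0, j) := hkge j hj
      rw [← Finset.mul_prod_erase S _ hi0]
      have hrest : ∏ i ∈ S.erase i0,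
          (Nat.factorial ((∑ x : V, (k (i, x) - if (i, x) = (i0, j) then 1 else 0)) -
            if i ≠ i1 then 1 else 0)) /
          (∏ x : V, Nat.factorial ((k (i, x) - if (i, x) = (i0, j) then 1 else 0) -
            if (i, x) ∈ T then 1 else 0)) =
          ∏ i ∈ S.erase i0,
          (Nat.factorial ((∑ x : V, k (i, x)) - if i ≠ i1 then 1 else 0)) /
          (∏ x : V, Nat.factorial (k (i, x) - if (i, x) ∈ T then 1 else 0)) := by
        apply Finset.prod_congr rfl
        intro i hi
        have hii0 : i ≠ i0 := (Finset.mem_erase.mp hi).1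
        have hrow : ∀ x : V, k (i, x) - (if (i, x) = (i0, j) then 1 else 0) = k (i, x) :=
          fun x => by rw [if_neg (fun hc => hii0 (congrArg Prod.fst hc)), Nat.sub_zero]
        simp only [hrow]
      rw [hrest]
      have hF'i0 : (Nat.factorial
            ((∑ x : V, (k (i0, x) - if (i0, x) = (i0, j) then 1 else 0)) -
              if i0 ≠ i1 then 1 else 0)) /
          (∏ x : V, Nat.factorial ((k (i0, x) - if (i0, x) = (i0, j) then 1 else 0) -
            if (i0, x) ∈ T then 1 else 0)) =
          Nat.multinomial Finset.univ
            (fun x : V => (k (i0, x) - if (i0, x) ∈ T then 1 else 0) -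
              if x = j then 1 else 0) := by
        rw [Nat.multinomial]
        congr 1
        · rw [row_step i0 j k hk1 i0, if_pos rfl]
          rw [Finset.sum_tsub_distrib Finset.univ
            (g := fun x : V => if x = j then 1 else 0) (fun x _ => by
              show (if x = j then 1 else 0) ≤ k (i0, x) - if (i0, x) ∈ T then 1 else 0
              by_cases hx : x = j
              · rw [if_pos hx, hx]; exact hj
              · rw [if_neg hx]; exact Nat.zero_le _), fact1]
          have hione : (∑ x : V, if x = j then 1 else 0) = 1 := by simp
          rw [hione]
          congr 1
          by_cases hi01 : i0 = i1
          · rw [if_neg (not_not_intro hi01)]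
            omega
          · rw [if_pos hi01]
        · apply Finset.prod_congr rfl
          intro x _
          congr 1
          have hiff : ((i0, x) = (i0, j)) = (x = j) :=
            propext ⟨fun h => congrArg Prod.snd h, fun h => by rw [h]⟩
          simp only [hiff]
          split_ifs <;> omega
      rw [hF'i0]

end Helpers

/-- Given crossing numbers `k` with the divergence of a path from `i0` to
`i1`, and an oriented spanning tree `T` of the support `S` of `k` rooted at `i1` along which
`k ≥ 1`, the number of paths from `i0` to `i1` with crossing numbers `k` and last-exit tree
`T` equals `∏_{i ∈ S} (k_i − 1_{i≠i1})! / ∏_{j} (k(i,j) − 1_{(i,j)∈T})!`. -/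
theorem card_paths_with_crossings_and_lastExitTree
    {V : Type*} [Fintype V] [DecidableEq V] (i0 i1 : V) (k : V × V → ℕ)
    (hdiag : ∀ i : V, k (i, i) = 0)
    (hdiv : ∀ i : V, ∑ j : V, ((k (i, j) : ℤ) - (k (j, i) : ℤ)) =
      (if i = i0 then 1 else 0) - (if i = i1 then 1 else 0))
    (S : Finset V)
    (hS : S = insert i1 (Finset.univ.filter fun i : V => 0 < ∑ j : V, k (i, j)))
    (hi0 : i0 ∈ S)
    (T : Finset (V × V))
    (hTfun : ∀ i ∈ S, i ≠ i1 → ∃! j : V, (i, j) ∈ T)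
    (hTroot : ∀ j : V, (i1, j) ∉ T)
    (hTk : ∀ p ∈ T, 1 ≤ k p)
    (hTreach : ∀ i ∈ S, i ≠ i1 →
      Relation.ReflTransGen (fun x y : V => (x, y) ∈ T) i i1) :
    Nat.card {γ : Fin ((∑ p : V × V, k p) + 1) → V //
        γ 0 = i0 ∧ γ (Fin.last _) = i1 ∧ (∀ p : V × V, crossings γ p = k p) ∧
        lastExitTree γ = ↑T}
      = ∏ i ∈ S,
          (Nat.factorial ((∑ j : V, k (i, j)) - if i ≠ i1 then 1 else 0)) /
            (∏ j : V, Nat.factorial (k (i, j) - if (i, j) ∈ T then 1 else 0)) := by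
  exact aux_count i1 (∑ p : V × V, k p) i0 k hdiag hdiv S hS hi0 T hTfun hTroot hTk hTreach rfl
end

section
/- Let V be a finite set, let γ = (γ_0, …, γ_n) be a finite sequence with values in V with n ≥ 1, and let T(γ) be its last-exit tree. Then: (1) for every vertex i ∈ {γ_0, …, γ_{n−1}} with i ≠ γ_n there is exactly one j ∈ V with (i,j) ∈ T(γ); (2) there is no pair of the form (γ_n, j) in T(γ); and (3) iterating the map i ↦ (the unique j with (i,j) ∈ T(γ)) starting from any vertex i ∈ {γ_0, …, γ_{n−1}} with i ≠ γ_n reaches γ_n after finitely many steps. In other words, the last-exit tree of a path is a spanning tree of the set of visited vertices, oriented toward (rooted at) the endpoint γ_n. -/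
open Classical in
private lemma exists_lastExit {V : Type*} {n : ℕ} (γ : Fin (n + 1) → V) (i : V)
    (u : Fin (n + 1)) (hu : γ u = i) (hi : i ≠ γ (Fin.last n)) :
    ∃ t : Fin n, γ t.castSucc = i ∧ (u : ℕ) ≤ (t : ℕ) ∧
      ∀ s : Fin (n + 1), (t : ℕ) < (s : ℕ) → γ s ≠ i := by
  classical
  let F := Finset.univ.filter (fun m : Fin (n + 1) => γ m = i)
  have hne : F.Nonempty := ⟨u, by simp [F, hu]⟩
  set m := F.max' hne with hmdef
  have hm : γ m = i := by
    have := F.max'_mem hne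
    simpa [F] using this
  have hmn : (m : ℕ) < n := by
    have hne' : m ≠ Fin.last n := by
      intro h
      exact hi (h ▸ hm).symm
    have h1 : (m : ℕ) ≤ n := Nat.lt_succ_iff.mp m.isLt
    have h2 : (m : ℕ) ≠ n := fun h => hne' (Fin.ext (by simp [h]))
    omega
  refine ⟨⟨(m : ℕ), hmn⟩, ?_, ?_, ?_⟩
  · have : (⟨(m : ℕ), hmn⟩ : Fin n).castSucc = m := Fin.ext (by simp)
    rw [this]; exact hm
  · exact F.le_max' u (by simp [F, hu])
  · intro s hs hsi
    have hsF : s ∈ F := by simp [F, hsi]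
    have hsm : (s : ℕ) ≤ (m : ℕ) := F.le_max' s hsF
    have hx : ((⟨(m : ℕ), hmn⟩ : Fin n) : ℕ) = (m : ℕ) := rfl
    omega

private lemma reach_aux {V : Type*} {n : ℕ} (γ : Fin (n + 1) → V) :
    ∀ k : ℕ, ∀ t : Fin n, n - (t : ℕ) ≤ k →
      (∀ s : Fin (n + 1), (t : ℕ) < (s : ℕ) → γ s ≠ γ t.castSucc) →
      Relation.ReflTransGen (fun x y : V => (x, y) ∈ lastExitTree γ)
        (γ t.castSucc) (γ (Fin.last n)) := by
  intro k
  induction k with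
  | zero => intro t hk _; exact absurd hk (by have := t.isLt; omega)
  | succ k ih =>
    intro t hk hlast
    have hedge : (γ t.castSucc, γ t.succ) ∈ lastExitTree γ := ⟨t, rfl, rfl, hlast⟩
    by_cases hj : γ t.succ = γ (Fin.last n)
    · exact Relation.ReflTransGen.single (hj ▸ hedge)
    · obtain ⟨t', h1, h2, h3⟩ := exists_lastExit γ (γ t.succ) t.succ rfl hj
      have hstep : n - (t' : ℕ) ≤ k := by
        have h4 : (t.succ : ℕ) = (t : ℕ) + 1 := rfl
        have := t'.isLt
        omega
      have := ih t' hstep (by intro s hs; rw [h1]; exact h3 s hs)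
      rw [h1] at this
      exact Relation.ReflTransGen.head hedge this

/-- The last-exit tree of a path `γ = (γ_0, …, γ_n)` (with `n ≥ 1`) is a
spanning tree of the set of visited vertices, oriented toward the endpoint `γ_n`:
(1) every visited vertex `i ≠ γ_n` has exactly one outgoing edge in the last-exit tree;
(2) the endpoint `γ_n` has no outgoing edge;
(3) following the tree edges from any visited vertex `i ≠ γ_n` reaches `γ_n` after finitely
many steps. -/
theorem lastExitTree_isSpanningTree {V : Type*} [Fintype V] {n : ℕ} (hn : 1 ≤ n)
    (γ : Fin (n + 1) → V) :
    (∀ i : V, (∃ t : Fin n, γ t.castSucc = i) → i ≠ γ (Fin.last n) →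
        ∃! j : V, (i, j) ∈ lastExitTree γ) ∧
    (∀ j : V, (γ (Fin.last n), j) ∉ lastExitTree γ) ∧
    (∀ i : V, (∃ t : Fin n, γ t.castSucc = i) → i ≠ γ (Fin.last n) →
        Relation.ReflTransGen (fun x y : V => (x, y) ∈ lastExitTree γ) i (γ (Fin.last n))) := by
  refine ⟨?_, ?_, ?_⟩
  · intro i ⟨u, hu⟩ hi
    obtain ⟨t, h1, _, h3⟩ := exists_lastExit γ i u.castSucc hu hi
    refine ⟨γ t.succ, ⟨t, h1, rfl, by simpa [h1] using h3⟩, ?_⟩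
    intro j ⟨t', h1', h2', h3'⟩
    have htt : (t : ℕ) = (t' : ℕ) := by
      by_contra hne
      rcases Nat.lt_or_ge (t : ℕ) (t' : ℕ) with h | h
      · exact h3 t'.castSucc (by simpa using h) h1'
      · have h' : (t' : ℕ) < (t : ℕ) := by omega
        exact h3' t.castSucc (by simpa using h') h1
    have : t = t' := Fin.ext htt
    rw [this, h2']
  · rintro j ⟨t, h1, _, h3⟩
    exact h3 (Fin.last n) (by simpa using t.isLt) rfl
  · intro i ⟨u, hu⟩ hi
    obtain ⟨t, h1, _, h3⟩ := exists_lastExit γ i u.castSucc hu hi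
    have := reach_aux γ n t (by omega) (by intro s hs; rw [h1]; exact h3 s hs)
    rwa [h1] at this
end
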